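/- Let A be a 2m-th order n-dimensional complex tensor and λ an Ĥ-eigenvalue of A. Then there exist indices t ≠ s such that (|λ − a_{t...tt̄...t̄}| − r̂_t(A)) · |λ − a_{s...ss̄...s̄}| ≤ r'_t(A) · r_s(A), where r'_t(A) is the sum of |a_{t i₂...i_m j̄₁...j̄_m}| over index tuples in which no index among i₂,...,i_m,j₁,...,j_m equals t, and r̂_t(A) = r_t(A) − r'_t(A). Hence σ_h(A) ⊆ K_ll(A). -/

import Mathlib

open Complex Finset

/-- The conjugate polynomial associated to a `2m`-th order `n`-dimensional complex tensor. -/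
noncomputable def fpoly {n m : ℕ} (A : (Fin m → Fin n) → (Fin m → Fin n) → ℂ)
    (x : Fin n → ℂ) : ℂ :=
  ∑ i : Fin m → Fin n, ∑ j : Fin m → Fin n,
    A i j * (∏ k, x (i k)) * ∏ k, (starRingEnd ℂ) (x (j k))

/-- Hermitian condition for a `2m`-th order tensor. -/
def IsHermitianTensor {n m : ℕ} (A : (Fin m → Fin n) → (Fin m → Fin n) → ℂ) : Prop :=
  ∀ i j, (starRingEnd ℂ) (A i j) = A j i

/-- Conjugate partial-symmetric tensor. -/
def IsCPS {n m : ℕ} (A : (Fin m → Fin n) → (Fin m → Fin n) → ℂ) : Prop :=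
  IsHermitianTensor A ∧
    ∀ (i j : Fin m → Fin n) (σ τ : Equiv.Perm (Fin m)), A (i ∘ σ) (j ∘ τ) = A i j

/-- `λ` is an `Ĥ`-eigenvalue of the `2(m+1)`-th order tensor `A` with eigenvector `x`. -/
noncomputable def IsHhatEigenpair {n m : ℕ}
    (A : (Fin (m+1) → Fin n) → (Fin (m+1) → Fin n) → ℂ)
    (lam : ℂ) (x : Fin n → ℂ) : Prop :=
  x ≠ 0 ∧ ∀ p : Fin n,
    (∑ i : Fin m → Fin n, ∑ j : Fin (m+1) → Fin n,
      A (Fin.cons p i) j * (∏ k, x (i k)) * ∏ k, (starRingEnd ℂ) (x (j k)))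
    = lam * (starRingEnd ℂ) (x p) * (((‖x p‖ : ℝ) : ℂ)) ^ (2*m)

/-- Diagonal entry `a_{p...p p̄...p̄}`. -/
noncomputable def diagEntry {n m : ℕ}
    (A : (Fin m → Fin n) → (Fin m → Fin n) → ℂ) (p : Fin n) : ℂ :=
  A (fun _ => p) (fun _ => p)

/-- `r_p(A)`: sum of moduli of the off-diagonal entries of the `p`-th slice. -/
noncomputable def rOff {n m : ℕ}
    (A : (Fin (m+1) → Fin n) → (Fin (m+1) → Fin n) → ℂ) (p : Fin n) : ℝ :=
  ∑ i : Fin m → Fin n, ∑ j : Fin (m+1) → Fin n,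
    if i = (fun _ => p) ∧ j = (fun _ => p) then 0
    else ‖A (Fin.cons p i) j‖

/-- `r'_p(A)`: sum over tuples in which no index equals `p`. -/
noncomputable def rPrime {n m : ℕ}
    (A : (Fin (m+1) → Fin n) → (Fin (m+1) → Fin n) → ℂ) (p : Fin n) : ℝ :=
  ∑ i : Fin m → Fin n, ∑ j : Fin (m+1) → Fin n,
    if (∀ k, i k ≠ p) ∧ (∀ k, j k ≠ p) then ‖A (Fin.cons p i) j‖ else 0

/-- `r̂_p(A) = r_p(A) - r'_p(A)`. -/
noncomputable def rHat {n m : ℕ}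
    (A : (Fin (m+1) → Fin n) → (Fin (m+1) → Fin n) → ℂ) (p : Fin n) : ℝ :=
  rOff A p - rPrime A p

/-- Entry `a_{p q...q q̄...q̄}`. -/
noncomputable def aSlice {n m : ℕ}
    (A : (Fin (m+1) → Fin n) → (Fin (m+1) → Fin n) → ℂ) (p q : Fin n) : ℂ :=
  A (Fin.cons p (fun _ => q)) (fun _ => q)

/-- `r_p^q(A) = r_p(A) - |a_{p q...q q̄...q̄}|`. -/
noncomputable def rOffSub {n m : ℕ}
    (A : (Fin (m+1) → Fin n) → (Fin (m+1) → Fin n) → ℂ) (p q : Fin n) : ℝ :=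
  rOff A p - ‖aSlice A p q‖

/-- Hermitian positive definiteness. -/
def HermitianPD {n m : ℕ} (A : (Fin m → Fin n) → (Fin m → Fin n) → ℂ) : Prop :=
  ∀ x : Fin n → ℂ, x ≠ 0 → ∃ r : ℝ, fpoly A x = r ∧ 0 < r

/-- Hermitian positive semidefiniteness. -/
def HermitianPSD {n m : ℕ} (A : (Fin m → Fin n) → (Fin m → Fin n) → ℂ) : Prop :=
  ∀ x : Fin n → ℂ, ∃ r : ℝ, fpoly A x = r ∧ 0 ≤ r

/-! Let `t` maximize `‖x q‖` and let `s` maximize it among `q ≠ t`; write `E = 2m + 1` for the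
degree of each row equation. In row `t`, the `r'_t` part of the tensor touches only coordinates
other than `t`, so it is weighted by `‖x s‖ ^ E` instead of `‖x t‖ ^ E`:
`(‖λ - a_t‖ - r̂_t) ‖x t‖ ^ E ≤ r'_t ‖x s‖ ^ E`. Row `s` gives
`‖λ - a_s‖ ‖x s‖ ^ E ≤ r_s ‖x t‖ ^ E`. Multiplying the two inequalities and cancelling
`‖x t‖ ^ E ‖x s‖ ^ E` gives the claim; if the first factor is positive then `x s ≠ 0`, so the
cancellation is allowed. -/

open ComplexConjugate

lemma Fintype.sum_sum_ite_and_eq_sub {α β M : Type*} [Fintype α] [Fintype β] [DecidableEq α]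
    [DecidableEq β] [AddCommGroup M] (f : α → β → M) (a : α) (b : β) :
    ∑ i, ∑ j, (if i = a ∧ j = b then 0 else f i j) = ∑ i, ∑ j, f i j - f a b := by
  have hsplit : ∀ i j, (if i = a ∧ j = b then 0 else f i j)
      = f i j - if i = a then (if j = b then f i j else 0) else 0 := by
    intro i j
    split_ifs <;> simp_all
  simp [hsplit, Finset.sum_sub_distrib]

section Slice

variable {n m : ℕ} (A : (Fin (m+1) → Fin n) → (Fin (m+1) → Fin n) → ℂ) (x : Fin n → ℂ) (p : Fin n)

noncomputable def sliceTerm (i : Fin m → Fin n) (j : Fin (m+1) → Fin n) : ℂ :=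
  A (Fin.cons p i) j * (∏ k, x (i k)) * ∏ k, conj (x (j k))

lemma sliceTerm_const :
    sliceTerm A x p (fun _ => p) (fun _ => p) = diagEntry A p * x p ^ m * conj (x p) ^ (m+1) := by
  have hcons : (Fin.cons p fun _ => p : Fin (m+1) → Fin n) = fun _ => p :=
    Fin.cons_self_tail (fun _ => p)
  simp [sliceTerm, diagEntry, hcons]

lemma norm_sliceTerm_le {i : Fin m → Fin n} {j : Fin (m+1) → Fin n} {e : ℝ} (he : 0 ≤ e)
    (hi : ∀ k, ‖x (i k)‖ ≤ e) (hj : ∀ k, ‖x (j k)‖ ≤ e) :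
    ‖sliceTerm A x p i j‖ ≤ ‖A (Fin.cons p i) j‖ * e ^ (2*m+1) := by
  have hprod : ∀ {l : ℕ} (f : Fin l → Fin n), (∀ k, ‖x (f k)‖ ≤ e) → ∏ k, ‖x (f k)‖ ≤ e ^ l :=
    fun f hf => (Finset.prod_le_prod (fun k _ => norm_nonneg _) fun k _ => hf k).trans_eq (by simp)
  calc ‖sliceTerm A x p i j‖
      = ‖A (Fin.cons p i) j‖ * (∏ k, ‖x (i k)‖) * ∏ k, ‖x (j k)‖ := by
        simp [sliceTerm, norm_prod]
    _ ≤ ‖A (Fin.cons p i) j‖ * e ^ m * e ^ (m+1) := by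
        gcongr
        exacts [hprod i hi, hprod j hj]
    _ = ‖A (Fin.cons p i) j‖ * e ^ (2*m+1) := by ring

lemma sum_offDiag_norm_mul_weight (c d : ℝ) :
    ∑ i : Fin m → Fin n, ∑ j : Fin (m+1) → Fin n,
      (if i = (fun _ => p) ∧ j = (fun _ => p) then 0
        else ‖A (Fin.cons p i) j‖ *
          if (∀ k, i k ≠ p) ∧ (∀ k, j k ≠ p) then d ^ (2*m+1) else c ^ (2*m+1))
      = rHat A p * c ^ (2*m+1) + rPrime A p * d ^ (2*m+1) := by
  have hpoint : ∀ (i : Fin m → Fin n) (j : Fin (m+1) → Fin n),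
      (if i = (fun _ => p) ∧ j = (fun _ => p) then 0
        else ‖A (Fin.cons p i) j‖ *
          if (∀ k, i k ≠ p) ∧ (∀ k, j k ≠ p) then d ^ (2*m+1) else c ^ (2*m+1))
      = (if i = (fun _ => p) ∧ j = (fun _ => p) then 0 else ‖A (Fin.cons p i) j‖) * c ^ (2*m+1)
        - (if (∀ k, i k ≠ p) ∧ (∀ k, j k ≠ p) then ‖A (Fin.cons p i) j‖ else 0)
          * (c ^ (2*m+1) - d ^ (2*m+1)) := by
    intro i j
    split_ifs with hdiag havoid
    · exact absurd (havoid.2 0) (by simp [hdiag.2])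
    all_goals ring
  simp_rw [hpoint, Finset.sum_sub_distrib, ← Finset.sum_mul]
  rw [rHat, rOff, rPrime]
  ring

lemma rOff_nonneg : 0 ≤ rOff A p :=
  Finset.sum_nonneg fun _ _ => Finset.sum_nonneg fun _ _ => by positivity

lemma rPrime_nonneg : 0 ≤ rPrime A p :=
  Finset.sum_nonneg fun _ _ => Finset.sum_nonneg fun _ _ => by positivity

variable {A x} {lam : ℂ}

lemma IsHhatEigenpair.sum_sliceTerm (h : IsHhatEigenpair A lam x) :
    ∑ i, ∑ j, sliceTerm A x p i j = lam * x p ^ m * conj (x p) ^ (m+1) := by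
  have hnorm : ((‖x p‖ : ℝ) : ℂ) ^ (2*m) = (x p * conj (x p)) ^ m := by
    rw [pow_mul, ← Complex.ofReal_pow, Complex.sq_norm, Complex.mul_conj]
  calc ∑ i, ∑ j, sliceTerm A x p i j = lam * conj (x p) * ((‖x p‖ : ℝ) : ℂ) ^ (2*m) := h.2 p
    _ = lam * x p ^ m * conj (x p) ^ (m+1) := by rw [hnorm]; ring

lemma IsHhatEigenpair.sum_offDiag_sliceTerm (h : IsHhatEigenpair A lam x) :
    ∑ i : Fin m → Fin n, ∑ j : Fin (m+1) → Fin n,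
      (if i = (fun _ => p) ∧ j = (fun _ => p) then 0 else sliceTerm A x p i j)
      = (lam - diagEntry A p) * x p ^ m * conj (x p) ^ (m+1) := by
  rw [Fintype.sum_sum_ite_and_eq_sub, sliceTerm_const, h.sum_sliceTerm]
  ring

lemma IsHhatEigenpair.norm_sub_diagEntry_mul_le (h : IsHhatEigenpair A lam x) {c d : ℝ}
    (hd : 0 ≤ d) (hc : ∀ q, ‖x q‖ ≤ c) (hd' : ∀ q, q ≠ p → ‖x q‖ ≤ d) :
    ‖lam - diagEntry A p‖ * ‖x p‖ ^ (2*m+1)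
      ≤ rHat A p * c ^ (2*m+1) + rPrime A p * d ^ (2*m+1) := by
  have hc0 : 0 ≤ c := (norm_nonneg _).trans (hc p)
  calc ‖lam - diagEntry A p‖ * ‖x p‖ ^ (2*m+1)
      = ‖(lam - diagEntry A p) * x p ^ m * conj (x p) ^ (m+1)‖ := by
        simp only [norm_mul, norm_pow, Complex.norm_conj]
        ring
    _ = ‖∑ i : Fin m → Fin n, ∑ j : Fin (m+1) → Fin n,
          (if i = (fun _ => p) ∧ j = (fun _ => p) then 0 else sliceTerm A x p i j)‖ := by
        rw [h.sum_offDiag_sliceTerm]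
    _ ≤ ∑ i : Fin m → Fin n, ∑ j : Fin (m+1) → Fin n,
          (if i = (fun _ => p) ∧ j = (fun _ => p) then 0
            else ‖A (Fin.cons p i) j‖ *
              if (∀ k, i k ≠ p) ∧ (∀ k, j k ≠ p) then d ^ (2*m+1) else c ^ (2*m+1)) := by
        refine (norm_sum_le _ _).trans (Finset.sum_le_sum fun i _ => ?_)
        refine (norm_sum_le _ _).trans (Finset.sum_le_sum fun j _ => ?_)
        split_ifs with hdiag havoid
        · simp
        · exact norm_sliceTerm_le A x p hd (fun k => hd' _ (havoid.1 k)) fun k => hd' _ (havoid.2 k)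
        · exact norm_sliceTerm_le A x p hc0 (fun k => hc _) fun k => hc _
    _ = rHat A p * c ^ (2*m+1) + rPrime A p * d ^ (2*m+1) := sum_offDiag_norm_mul_weight A p c d

lemma IsHhatEigenpair.norm_sub_diagEntry_mul_le_rOff (h : IsHhatEigenpair A lam x) {c : ℝ}
    (hc : ∀ q, ‖x q‖ ≤ c) :
    ‖lam - diagEntry A p‖ * ‖x p‖ ^ (2*m+1) ≤ rOff A p * c ^ (2*m+1) := by
  have := h.norm_sub_diagEntry_mul_le p ((norm_nonneg _).trans (hc p)) hc fun q _ => hc q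
  rwa [← add_mul, rHat, sub_add_cancel] at this

end Slice

lemma exists_max_and_second_max {ι : Type*} [Fintype ι] (hι : 1 < Fintype.card ι) (f : ι → ℝ) :
    ∃ t s, s ≠ t ∧ (∀ q, f q ≤ f t) ∧ ∀ q, q ≠ t → f q ≤ f s := by
  classical
  have : Nonempty ι := Fintype.card_pos_iff.mp (by omega)
  obtain ⟨t, -, ht⟩ := Finset.exists_max_image Finset.univ f Finset.univ_nonempty
  have hne : (Finset.univ.erase t).Nonempty := by
    rw [← Finset.card_pos, Finset.card_erase_of_mem (Finset.mem_univ t), Finset.card_univ]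
    omega
  obtain ⟨s, hs, hmax⟩ := Finset.exists_max_image _ f hne
  exact ⟨t, s, Finset.ne_of_mem_erase hs, fun q => ht q (Finset.mem_univ q),
    fun q hq => hmax q (Finset.mem_erase.mpr ⟨hq, Finset.mem_univ q⟩)⟩

lemma mul_le_mul_of_cross_bounds {α β u v P Q : ℝ} (hP : 0 < P) (hQ : 0 ≤ Q) (hβ : 0 ≤ β)
    (hu : 0 ≤ u) (hv : 0 ≤ v) (h₁ : α * P ≤ u * Q) (h₂ : β * Q ≤ v * P) :
    α * β ≤ u * v := by
  rcases le_or_gt α 0 with hα | hα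
  · exact (mul_nonpos_of_nonpos_of_nonneg hα hβ).trans (mul_nonneg hu hv)
  have hprod : α * P * (β * Q) ≤ u * Q * (v * P) :=
    mul_le_mul h₁ h₂ (mul_nonneg hβ hQ) ((mul_pos hα hP).le.trans h₁)
  have hQ' : 0 < Q := pos_of_mul_pos_right ((mul_pos hα hP).trans_le h₁) hu
  exact le_of_mul_le_mul_right (by linarith) (mul_pos hP hQ')

theorem hhat_eigenvalue_in_ll {n m : ℕ} (hn : 1 < n)
    (A : (Fin (m+1) → Fin n) → (Fin (m+1) → Fin n) → ℂ)
    (lam : ℂ) (x : Fin n → ℂ) (h : IsHhatEigenpair A lam x) :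
    ∃ t s : Fin n, t ≠ s ∧
      (‖lam - diagEntry A t‖ - rHat A t) * ‖lam - diagEntry A s‖
        ≤ rPrime A t * rOff A s := by
  obtain ⟨t, s, hst, ht, hs⟩ :=
    exists_max_and_second_max (by simpa using hn) fun q => ‖x q‖
  have hxt : 0 < ‖x t‖ := by
    obtain ⟨q, hq⟩ := Function.ne_iff.mp h.1
    exact (norm_pos_iff.mpr hq).trans_le (ht q)
  have h₁ := h.norm_sub_diagEntry_mul_le t (norm_nonneg _) ht hs
  have h₂ := h.norm_sub_diagEntry_mul_le_rOff s ht
  exact ⟨t, s, hst.symm, mul_le_mul_of_cross_bounds (pow_pos hxt _) (by positivity)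
    (norm_nonneg _) (rPrime_nonneg A t) (rOff_nonneg A s) (by linarith) h₂⟩
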